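/- Let φ be a propositional formula on the variables x₁,…,xₙ and let D be a DNF, each of whose terms has no repeated variable, that is M-equivalent to φ. For a non-contradictory term γ of D, let v(γ) ∈ {−1,0,1}ⁿ be the ternary vector assigning 1 to each variable occurring positively in γ, −1 to each variable occurring negatively in γ, and 0 to all other variables. Then: (a) the K3-evaluation of φ at v(γ) equals 1 for every non-contradictory term γ of D; and (b) every binary vector b ∈ {−1,1}ⁿ at which φ evaluates to true is a refinement of v(γ) for some non-contradictory term γ of D (i.e., b agrees with v(γ) on all nonzero entries of v(γ)). -/

import Mathlib

/-- Propositional formulas over `n` variables, built from `¬`, `∧`, `∨`. -/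
inductive PropForm (n : ℕ) : Type where
  | var : Fin n → PropForm n
  | neg : PropForm n → PropForm n
  | conj : PropForm n → PropForm n → PropForm n
  | disj : PropForm n → PropForm n → PropForm n

namespace PropForm

/-- The multiple-valued semantics `M` over the integers:
`∧` is `min`, `∨` is `max`, `¬` is integer negation. -/
def evalM {n : ℕ} (v : Fin n → ℤ) : PropForm n → ℤ
  | var i => v i
  | neg φ => -(evalM v φ)
  | conj φ ψ => min (evalM v φ) (evalM v ψ)
  | disj φ ψ => max (evalM v φ) (evalM v ψ)

/-- The binary semantics `B₂` over `Bool`. -/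
def evalB {n : ℕ} (b : Fin n → Bool) : PropForm n → Bool
  | var i => b i
  | neg φ => !(evalB b φ)
  | conj φ ψ => evalB b φ && evalB b ψ
  | disj φ ψ => evalB b φ || evalB b ψ

end PropForm

/-- A literal: a variable together with a polarity (`true` = positive). -/
abbrev Lit (n : ℕ) := Fin n × Bool

/-- `M`-value of a literal under a valuation. -/
def litValM {n : ℕ} (v : Fin n → ℤ) (l : Lit n) : ℤ :=
  if l.2 then v l.1 else -(v l.1)

/-- Binary value of a literal under a binary valuation. -/
def litValB {n : ℕ} (b : Fin n → Bool) (l : Lit n) : Bool :=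
  if l.2 then b l.1 else !(b l.1)

/-- `M`-value of a conjunctive term (a list of literals), the minimum of the
literal values (for nonempty terms; the value on `[]` is a dummy). -/
def Term.evalM {n : ℕ} (v : Fin n → ℤ) : List (Lit n) → ℤ
  | [] => 0
  | [l] => litValM v l
  | l :: ls => min (litValM v l) (Term.evalM v ls)

/-- Binary value of a conjunctive term: the conjunction of its literal values. -/
def Term.evalB {n : ℕ} (b : Fin n → Bool) (t : List (Lit n)) : Bool :=
  t.all (litValB b)

/-- `M`-value of a DNF (a list of conjunctive terms), the maximum of the
term values (for nonempty DNFs; the value on `[]` is a dummy). -/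
def DNF.evalM {n : ℕ} (v : Fin n → ℤ) : List (List (Lit n)) → ℤ
  | [] => 0
  | [t] => Term.evalM v t
  | t :: ts => max (Term.evalM v t) (DNF.evalM v ts)

/-- A term is contradictory if it contains both `x` and `¬x` for some variable. -/
def Contra {n : ℕ} (t : List (Lit n)) : Prop :=
  ∃ i : Fin n, ((i, true) : Lit n) ∈ t ∧ ((i, false) : Lit n) ∈ t

/-!
Part (a): from the ternary vector `t = v(γ)` build the nonzero valuation `u` that doubles `t` and
replaces its zeros by `1`. Every literal of `γ` has value `2` under `u`, so `D`, and hence `φ`,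
has `M`-value at least `2` at `u`. The `M`-semantics is positively homogeneous and 1-Lipschitz
for the sup distance, and `|u - 2t| ≤ 1`, so `2 φ(t) ≥ 1`; as `|t| ≤ 1`, this forces `φ(t) = 1`.

Part (b): at a binary vector `b` with `φ(b) > 0`, the maximum over the terms of `D` is positive,
so some term `γ` has all its literals positive under `b`. Such a term is not contradictory, and
`b` agrees with `v(γ)` on the variables of `γ`.
-/

namespace PropForm

variable {n : ℕ}

theorem abs_evalM_sub_le (φ : PropForm n) {u v : Fin n → ℤ} {c : ℤ}
    (h : ∀ i, |u i - v i| ≤ c) : |evalM u φ - evalM v φ| ≤ c := by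
  induction φ with
  | var i => exact h i
  | neg φ ih => simp only [evalM]; rw [abs_le] at ih ⊢; omega
  | conj φ ψ ih₁ ih₂ => simp only [evalM]; rw [abs_le] at ih₁ ih₂ ⊢; omega
  | disj φ ψ ih₁ ih₂ => simp only [evalM]; rw [abs_le] at ih₁ ih₂ ⊢; omega

theorem abs_evalM_le (φ : PropForm n) {v : Fin n → ℤ} {c : ℤ} (h : ∀ i, |v i| ≤ c) :
    |evalM v φ| ≤ c := by
  induction φ with
  | var i => exact h i
  | neg φ ih => simpa only [evalM, abs_neg] using ih
  | conj φ ψ ih₁ ih₂ => simp only [evalM]; rw [abs_le] at ih₁ ih₂ ⊢; omega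
  | disj φ ψ ih₁ ih₂ => simp only [evalM]; rw [abs_le] at ih₁ ih₂ ⊢; omega

theorem evalM_const_mul (φ : PropForm n) (v : Fin n → ℤ) {c : ℤ} (hc : 0 ≤ c) :
    evalM (fun i => c * v i) φ = c * evalM v φ := by
  induction φ with
  | var i => rfl
  | neg φ ih => simp only [evalM, ih, mul_neg]
  | conj φ ψ ih₁ ih₂ => simp only [evalM, ih₁, ih₂, mul_min_of_nonneg _ _ hc]
  | disj φ ψ ih₁ ih₂ => simp only [evalM, ih₁, ih₂, mul_max_of_nonneg _ _ hc]

end PropForm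

namespace Term

variable {n : ℕ}

theorem evalM_le_litValM (v : Fin n → ℤ) {l : Lit n} {t : List (Lit n)} (hl : l ∈ t) :
    evalM v t ≤ litValM v l := by
  induction t with
  | nil => simp at hl
  | cons a ts ih =>
    cases ts with
    | nil => rw [List.mem_singleton.mp hl]; rfl
    | cons b ts =>
      change min (litValM v a) (evalM v (b :: ts)) ≤ _
      rcases List.mem_cons.mp hl with rfl | hl
      · exact min_le_left _ _
      · exact (min_le_right _ _).trans (ih hl)

theorem le_evalM {v : Fin n → ℤ} {c : ℤ} {t : List (Lit n)} (ht : t ≠ [])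
    (h : ∀ l ∈ t, c ≤ litValM v l) : c ≤ evalM v t := by
  induction t with
  | nil => exact absurd rfl ht
  | cons a ts ih =>
    cases ts with
    | nil => exact h a List.mem_cons_self
    | cons b ts =>
      change c ≤ min (litValM v a) (evalM v (b :: ts))
      exact le_min (h a List.mem_cons_self)
        (ih (List.cons_ne_nil _ _) fun l hl => h l (List.mem_cons_of_mem _ hl))

end Term

namespace DNF

variable {n : ℕ}

theorem le_evalM_of_mem (v : Fin n → ℤ) {t : List (Lit n)} {D : List (List (Lit n))}
    (ht : t ∈ D) : Term.evalM v t ≤ evalM v D := by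
  induction D with
  | nil => simp at ht
  | cons a ts ih =>
    cases ts with
    | nil => rw [List.mem_singleton.mp ht]; rfl
    | cons b ts =>
      change _ ≤ max (Term.evalM v a) (evalM v (b :: ts))
      rcases List.mem_cons.mp ht with rfl | ht
      · exact le_max_left _ _
      · exact (ih ht).trans (le_max_right _ _)

theorem exists_term_evalM_pos {v : Fin n → ℤ} {D : List (List (Lit n))}
    (h : 0 < evalM v D) : ∃ t ∈ D, 0 < Term.evalM v t := by
  induction D with
  | nil => exact absurd h (lt_irrefl 0)
  | cons a ts ih =>
    cases ts with
    | nil => exact ⟨a, List.mem_cons_self, h⟩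
    | cons b ts =>
      change 0 < max (Term.evalM v a) (evalM v (b :: ts)) at h
      rcases lt_max_iff.mp h with ha | hts
      · exact ⟨a, List.mem_cons_self, ha⟩
      · obtain ⟨t, ht, hpos⟩ := ih hts
        exact ⟨t, List.mem_cons_of_mem _ ht, hpos⟩

end DNF

theorem evalM_eq_one_of_litValM_eq_one {n : ℕ} {φ : PropForm n} {D : List (List (Lit n))}
    (hD : ∀ v : Fin n → ℤ, (∀ i, v i ≠ 0) → DNF.evalM v D = PropForm.evalM v φ)
    {γ : List (Lit n)} (hγD : γ ∈ D) (hγ : γ ≠ []) {t : Fin n → ℤ} (ht : ∀ i, |t i| ≤ 1)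
    (hγt : ∀ l ∈ γ, litValM t l = 1) : PropForm.evalM t φ = 1 := by
  set u : Fin n → ℤ := fun i => if t i = 0 then 1 else 2 * t i
  have hu : ∀ i, u i ≠ 0 := fun i => by dsimp only [u]; split_ifs <;> omega
  have hut : ∀ i, |u i - 2 * t i| ≤ 1 := fun i => by dsimp only [u]; split_ifs <;> simp [*]
  have hγu : ∀ l ∈ γ, 2 ≤ litValM u l := by
    rintro ⟨i, _ | _⟩ hl
    all_goals
      have hti := hγt _ hl
      simp only [litValM, if_true, Bool.false_eq_true, if_false] at hti ⊢
      simp only [u]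
      split_ifs <;> omega
  have hφu : 2 ≤ PropForm.evalM u φ :=
    hD u hu ▸ (Term.le_evalM hγ hγu).trans (DNF.le_evalM_of_mem u hγD)
  have hclose := φ.abs_evalM_sub_le hut
  rw [φ.evalM_const_mul t zero_le_two] at hclose
  have hφt := φ.abs_evalM_le ht
  rw [abs_le] at hclose hφt
  omega

section TernaryVec

variable {n : ℕ}

def ternaryVec (γ : List (Lit n)) (i : Fin n) : ℤ :=
  if ((i, true) : Lit n) ∈ γ then 1 else if ((i, false) : Lit n) ∈ γ then -1 else 0

theorem abs_ternaryVec_le_one (γ : List (Lit n)) (i : Fin n) : |ternaryVec γ i| ≤ 1 := by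
  unfold ternaryVec; split_ifs <;> norm_num

theorem litValM_ternaryVec {γ : List (Lit n)} (hγ : ¬ Contra γ) {l : Lit n} (hl : l ∈ γ) :
    litValM (ternaryVec γ) l = 1 := by
  obtain ⟨i, _ | _⟩ := l
  · have hi : ((i, true) : Lit n) ∉ γ := fun hi => hγ ⟨i, hi, hl⟩
    simp [litValM, ternaryVec, hi, hl]
  · simp [litValM, ternaryVec, hl]

theorem not_contra_of_litValM_pos {v : Fin n → ℤ} {γ : List (Lit n)}
    (h : ∀ l ∈ γ, 0 < litValM v l) : ¬ Contra γ := by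
  rintro ⟨i, hpos, hneg⟩
  have h₁ := h _ hpos
  have h₂ := h _ hneg
  simp only [litValM, if_true, Bool.false_eq_true, if_false] at h₁ h₂
  omega

theorem eq_ternaryVec_of_litValM_pos {b : Fin n → ℤ} (hb : ∀ i, b i = 1 ∨ b i = -1)
    {γ : List (Lit n)} (h : ∀ l ∈ γ, 0 < litValM b l) {i : Fin n} (hi : ternaryVec γ i ≠ 0) :
    b i = ternaryVec γ i := by
  unfold ternaryVec at hi ⊢
  split_ifs at hi ⊢ with hpos hneg
  · have := h _ hpos; simp only [litValM, if_true] at this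
    rcases hb i with hbi | hbi <;> omega
  · have := h _ hneg; simp only [litValM, Bool.false_eq_true, if_false] at this
    rcases hb i with hbi | hbi <;> omega
  · exact absurd rfl hi

end TernaryVec

theorem ternary_cover_general {n : ℕ} (φ : PropForm n) (D : List (List (Lit n)))
    (hDt : ∀ t ∈ D, t ≠ [])
    (hD : ∀ v : Fin n → ℤ, (∀ i, v i ≠ 0) → DNF.evalM v D = PropForm.evalM v φ)
    (w : List (Lit n) → Fin n → ℤ)
    (hw : ∀ (γ : List (Lit n)) (i : Fin n), w γ i =
      if ((i, true) : Lit n) ∈ γ then 1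
      else if ((i, false) : Lit n) ∈ γ then -1 else 0) :
    (∀ γ ∈ D, ¬ Contra γ → PropForm.evalM (w γ) φ = 1) ∧
    (∀ b : Fin n → ℤ, (∀ i, b i = 1 ∨ b i = -1) → 0 < PropForm.evalM b φ →
      ∃ γ ∈ D, ¬ Contra γ ∧ ∀ i : Fin n, w γ i ≠ 0 → b i = w γ i) := by
  obtain rfl : w = ternaryVec := funext fun γ => funext (hw γ)
  refine ⟨fun γ hγD hγc => evalM_eq_one_of_litValM_eq_one hD hγD (hDt γ hγD)
    (abs_ternaryVec_le_one γ) fun _ => litValM_ternaryVec hγc, ?_⟩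
  intro b hb hφb
  have hb0 : ∀ i, b i ≠ 0 := fun i => by rcases hb i with h | h <;> omega
  obtain ⟨γ, hγD, hγb⟩ := DNF.exists_term_evalM_pos (hD b hb0 ▸ hφb)
  have hlit : ∀ l ∈ γ, 0 < litValM b l := fun l hl =>
    hγb.trans_le (Term.evalM_le_litValM b hl)
  exact ⟨γ, hγD, not_contra_of_litValM_pos hlit,
    fun i => eq_ternaryVec_of_litValM_pos hb hlit⟩

/-- let `D` be a DNF, with no repeated variable in any term,
which is `M`-equivalent to `φ`, and for a non-contradictory term `γ` let `w γ`
be the ternary vector assigning `1`/`-1` to the positive/negative variables of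
`γ` and `0` elsewhere. Then (a) the `K₃`-evaluation of `φ` at `w γ` is `1` for
every non-contradictory term `γ` of `D`, and (b) every binary vector
`b ∈ {-1,1}ⁿ` satisfying `φ` refines `w γ` for some non-contradictory term `γ`
of `D`. -/
theorem ternary_cover {n : ℕ} (φ : PropForm n) (D : List (List (Lit n)))
    (hDne : D ≠ []) (hDt : ∀ t ∈ D, t ≠ [])
    (hnd : ∀ t ∈ D, (t.map Prod.fst).Nodup)
    (hD : ∀ v : Fin n → ℤ, (∀ i, v i ≠ 0) → DNF.evalM v D = PropForm.evalM v φ)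
    (w : List (Lit n) → Fin n → ℤ)
    (hw : ∀ (γ : List (Lit n)) (i : Fin n), w γ i =
      if ((i, true) : Lit n) ∈ γ then 1
      else if ((i, false) : Lit n) ∈ γ then -1 else 0) :
    (∀ γ ∈ D, ¬ Contra γ → PropForm.evalM (w γ) φ = 1) ∧
    (∀ b : Fin n → ℤ, (∀ i, b i = 1 ∨ b i = -1) → 0 < PropForm.evalM b φ →
      ∃ γ ∈ D, ¬ Contra γ ∧ ∀ i : Fin n, w γ i ≠ 0 → b i = w γ i) :=
  ternary_cover_general φ D hDt hD w hw
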